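/- arXiv:1910.07319 — 5 statements merged into one kernel-verified Lean document; each statement's English description precedes it below -/
import Mathlib

section
/- Let π : A → O be a complete Noetherian local ring surjecting onto a discrete valuation ring with Φ_A := ker(π)/ker(π)² of finite length, and set η_A := π(Ann_A(ker π)). Then O/η_A has finite length and length(Φ_A) ≥ length(O/η_A). -/
universe u

open IsLocalRing

/-- The length of a module, expressed as the Krull dimension of its lattice of
submodules (this agrees with the usual Jordan–Hölder length). -/
noncomputable def moduleLength (R M : Type*) [Ring R] [AddCommGroup M] [Module R M] :
    WithBot ℕ∞ :=
  Order.krullDim (Submodule R M)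

/-- A (Noetherian) local ring is regular if its maximal ideal is generated by
`dim R` elements. -/
def IsRegularLocalRing' (R : Type*) [CommRing R] : Prop :=
  IsNoetherianRing R ∧ ∃ (h : IsLocalRing R) (s : Finset R),
    Ideal.span (s : Set R) = @IsLocalRing.maximalIdeal R _ h ∧
    (s.card : WithBot ℕ∞) = ringKrullDim R

/-- A local ring is a complete intersection if it is the quotient of a regular
local ring by an ideal generated by a regular sequence. -/
def IsCompleteIntersectionLocalRing (A : Type u) [CommRing A] : Prop :=
  IsLocalRing A ∧ IsNoetherianRing A ∧
  ∃ (R : CommRingCat.{u}) (f : R →+* A) (rs : List R),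
    IsRegularLocalRing' R ∧ Function.Surjective f ∧
    RingTheory.Sequence.IsRegular (R : Type u) rs ∧
    RingHom.ker f = Ideal.span {x | x ∈ rs}

/-!
Write `I = ker π`. Over the DVR `O` the cotangent module `I/I²` has finite length, hence is
torsion. Presenting it by the classes of generators `x` of `I` and putting the module of
relations in Smith normal form gives a square matrix `c` of relations over `O` with
`ord (det c) = length (I/I²)`. Lift `c` to a matrix `C` over `A`: the relations say
`C x ∈ I²`, i.e. `C x = B x` for a matrix `B` with entries in `I`. So `det (C - B)` kills `x`,
hence `I`, and reduces to `det c` modulo `I`. Thus `det c ∈ η_A`, and `O/η_A` is a quotient of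
`O/(det c)`, whose length is that of `I/I²`.
-/

open Matrix Submodule

theorem Matrix.det_smul_eq_zero_of_mulVec_eq_zero {R n : Type*} [CommRing R] [Fintype n]
    [DecidableEq n] {M : Matrix n n R} {v : n → R} (h : M *ᵥ v = 0) : M.det • v = 0 := by
  rw [← one_mulVec v, ← smul_mulVec, ← adjugate_mul, ← mulVec_mulVec, h, mulVec_zero]

theorem Ideal.exists_mem_annihilator_sub_det_mem {A ι : Type*} [CommRing A] [Fintype ι]
    [DecidableEq ι] {I : Ideal A} {x : ι → A} (hx : Ideal.span (Set.range x) = I)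
    (C : Matrix ι ι A) (hC : ∀ i, (C *ᵥ x) i ∈ I ^ 2) :
    ∃ δ ∈ I.annihilator, C.det - δ ∈ I := by
  have hcoeff : ∀ i, ∃ b : ι → A, (∀ j, b j ∈ I) ∧ (C *ᵥ x) i = ∑ j, b j * x j := by
    intro i
    have := hC i
    rw [pow_two, ← smul_eq_mul, ← hx, Ideal.span, mem_ideal_smul_span_iff_exists_sum] at this
    obtain ⟨b, hb, hsum⟩ := this
    exact ⟨b, fun j ↦ hx ▸ hb j, by rw [← hsum, Finsupp.sum_fintype _ _ (by simp)]; rfl⟩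
  choose B hBI hB using hcoeff
  have hkill : (C - Matrix.of B) *ᵥ x = 0 := by
    ext i
    rw [sub_mulVec, Pi.sub_apply, Pi.zero_apply, hB, sub_eq_zero]
    rfl
  refine ⟨(C - Matrix.of B).det, ?_, ?_⟩
  · rw [← hx, Ideal.span, mem_annihilator_span]
    rintro ⟨_, j, rfl⟩
    exact congrFun (det_smul_eq_zero_of_mulVec_eq_zero hkill) j
  · rw [← Ideal.Quotient.eq, RingHom.map_det, RingHom.map_det]
    congr 1
    ext i j
    simp [Ideal.Quotient.eq_zero_iff_mem.mpr (hBI i j)]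

theorem Ring.ord_prod {R ι : Type*} [CommRing R] (s : Finset ι) {a : ι → R}
    (ha : ∀ i ∈ s, a i ∈ nonZeroDivisors R) :
    Ring.ord R (∏ i ∈ s, a i) = ∑ i ∈ s, Ring.ord R (a i) := by
  classical
  induction s using Finset.induction_on with
  | empty => simp
  | insert i s hi ih =>
    rw [Finset.prod_insert hi, Finset.sum_insert hi, Ring.ord_mul' R (ha i (by simp)),
      ih fun j hj ↦ ha j (by simp [hj])]

theorem Module.isTorsion_of_isArtinian {R M : Type*} [CommRing R] [IsDomain R] (hR : ¬IsField R)
    [AddCommGroup M] [Module R M] [IsArtinian R M] : Module.IsTorsion R M := by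
  intro x
  by_contra! hx
  have hinj : Function.Injective (LinearMap.toSpanSingleton R M x) := by
    rw [← LinearMap.ker_eq_bot, LinearMap.ker_eq_bot']
    intro r hr
    by_contra hr0
    exact hx ⟨r, mem_nonZeroDivisors_of_ne_zero hr0⟩ hr
  have : IsArtinianRing R := isArtinian_of_injective _ hinj
  exact hR (IsArtinianRing.isField_of_isDomain R)

theorem exists_relation_matrix_ord_det_eq_length {R M ι : Type*} [CommRing R] [IsDomain R]
    [IsPrincipalIdealRing R] [AddCommGroup M] [Module R M] [Fintype ι] [DecidableEq ι]
    (hM : Module.IsTorsion R M) {g : (ι → R) →ₗ[R] M} (hg : Function.Surjective g) :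
    ∃ c : Matrix ι ι R, (∀ i, g (c i) = 0) ∧ Ring.ord R c.det = Module.length R M := by
  have hrank : Module.finrank R (LinearMap.ker g) = Module.finrank R (ι → R) := by
    have : Module.finrank R M = 0 := Module.finrank_eq_zero_of_rank_eq_zero <|
      rank_eq_zero_iff.mpr fun x ↦
        let ⟨a, ha⟩ := hM (x := x)
        ⟨a, nonZeroDivisors.coe_ne_zero a, ha⟩
    rw [← (LinearMap.ker g).finrank_quotient_add_finrank,
      (g.quotKerEquivOfSurjective hg).finrank_eq, this, zero_add]
  set b := Pi.basisFun R ι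
  set a := smithNormalFormCoeffs b hrank
  refine ⟨Matrix.of fun i ↦ (smithNormalFormBotBasis b hrank i : ι → R),
    fun i ↦ (smithNormalFormBotBasis b hrank i).2, ?_⟩
  have hdet : (Matrix.of fun i ↦ (smithNormalFormBotBasis b hrank i : ι → R)).det =
      (∏ i, a i) * b.det (smithNormalFormTopBasis b hrank) := by
    rw [← Pi.basisFun_det_apply]
    simp_rw [smithNormalFormBotBasis_def]
    rw [AlternatingMap.map_smul_univ, smul_eq_mul]
  calc Ring.ord R _ = ∑ i, Ring.ord R (a i) := by
        rw [hdet, Ring.ord_mul_of_isUnit_right (b.isUnit_det _),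
          Ring.ord_prod _ fun i _ ↦
            mem_nonZeroDivisors_of_ne_zero (smithNormalFormCoeffs_ne_zero b hrank i)]
    _ = Module.length R ((ι → R) ⧸ LinearMap.ker g) := by
        rw [((LinearMap.ker g).quotientEquivPiSpan b hrank).length_eq, Module.length_pi_of_fintype]
        rfl
    _ = Module.length R M := (g.quotKerEquivOfSurjective hg).length_eq

theorem Ring.length_quotient_le_ord_of_mem {R : Type*} [CommRing R] {J : Ideal R} {d : R}
    (hd : d ∈ J) : Module.length R (R ⧸ J) ≤ Ring.ord R d :=
  have hle : Ideal.span {d} ≤ J := (Ideal.span_singleton_le_iff_mem J).mpr hd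
  Module.length_le_of_surjective (factor hle) (factor_surjective hle)

theorem Ideal.exists_mem_map_annihilator_ord_eq_length_cotangent {A B : Type*} [CommRing A]
    [CommRing B] [IsDomain B] [IsPrincipalIdealRing B] [Algebra A B]
    (hsurj : Function.Surjective (algebraMap A B)) {I : Ideal A}
    (hI : I ≤ RingHom.ker (algebraMap A B)) (hfg : I.FG) [Module B I.Cotangent]
    [IsScalarTower A B I.Cotangent] (htors : Module.IsTorsion B I.Cotangent) :
    ∃ d ∈ I.annihilator.map (algebraMap A B), Ring.ord B d = Module.length B I.Cotangent := by
  classical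
  have : Module.Finite A I := Module.Finite.iff_fg.mpr hfg
  obtain ⟨n, s, hs⟩ := Module.Finite.exists_fin (R := A) (M := I)
  have hspan : Ideal.span (Set.range fun j ↦ (s j : A)) = I := by
    conv_rhs => rw [← Submodule.map_subtype_top I, ← hs, Submodule.map_span, ← Set.range_comp]
    rfl
  have hg : Function.Surjective (Fintype.linearCombination B fun j ↦ I.toCotangent (s j)) := by
    rw [← LinearMap.range_eq_top, Fintype.range_linearCombination,
      ← restrictScalars_eq_top_iff A, eq_top_iff]
    refine le_trans ?_ (span_le_restrictScalars A B _)
    rw [Set.range_comp' I.toCotangent s, Submodule.span_image, hs, Submodule.map_top,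
      Ideal.toCotangent_range]
  obtain ⟨c, hc, hord⟩ := exists_relation_matrix_ord_det_eq_length htors hg
  obtain ⟨C, rfl⟩ : ∃ C : Matrix (Fin n) (Fin n) A, (algebraMap A B).mapMatrix C = c :=
    ⟨.of fun i j ↦ (hsurj (c i j)).choose, by ext i j; exact (hsurj _).choose_spec⟩
  have hrel : ∀ i, (C *ᵥ fun j ↦ (s j : A)) i ∈ I ^ 2 := by
    intro i
    have : I.toCotangent (∑ j, C i j • s j) = 0 := by
      simpa [← algebraMap_smul B, Fintype.linearCombination_apply] using hc i
    simpa [mulVec, dotProduct] using (I.toCotangent_eq_zero _).mp this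
  obtain ⟨δ, hδ, hdet⟩ := Ideal.exists_mem_annihilator_sub_det_mem hspan C hrel
  refine ⟨_, ?_, hord⟩
  rw [← RingHom.map_det, (RingHom.sub_mem_ker_iff _).mp (hI hdet)]
  exact Ideal.mem_map_of_mem _ hδ

theorem length_cotangent_ge_length_congruence_module_general
    (A : Type u) [CommRing A] [IsNoetherianRing A]
    (O : Type u) [CommRing O] [IsDomain O] [IsDiscreteValuationRing O]
    (π : A →+* O) (hπ : Function.Surjective π)
    (hfin : IsFiniteLength A (RingHom.ker π).Cotangent) :
    IsFiniteLength O (O ⧸ ((RingHom.ker π).annihilator.map π)) ∧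
    moduleLength O (O ⧸ ((RingHom.ker π).annihilator.map π)) ≤
      moduleLength A (RingHom.ker π).Cotangent := by
  let _ : Algebra A O := π.toAlgebra
  let _ : Module O (RingHom.ker π).Cotangent :=
    Module.compHom _ (RingHom.quotientKerEquivOfSurjective hπ).symm.toRingHom
  have : IsScalarTower A O (RingHom.ker π).Cotangent := .of_algebraMap_smul fun a m ↦ by
    change (RingHom.quotientKerEquivOfSurjective hπ).symm (π a) • m = a • m
    rw [RingEquiv.symm_apply_eq _ |>.mpr (RingHom.quotientKerEquivOfSurjective_apply_mk hπ a).symm]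
    exact algebraMap_smul _ a m
  have : IsArtinian O (RingHom.ker π).Cotangent :=
    isArtinian_of_tower A (isFiniteLength_iff_isNoetherian_isArtinian.mp hfin).2
  obtain ⟨d, hd, hord⟩ := Ideal.exists_mem_map_annihilator_ord_eq_length_cotangent
    (I := RingHom.ker π) hπ le_rfl (IsNoetherian.noetherian _)
    (Module.isTorsion_of_isArtinian (IsDiscreteValuationRing.not_isField O))
  have hle : Module.length O (O ⧸ (RingHom.ker π).annihilator.map π) ≤
      Module.length A (RingHom.ker π).Cotangent := by
    rw [Module.length_eq_of_surjective hπ, ← hord]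
    exact Ring.length_quotient_le_ord_of_mem hd
  refine ⟨Module.length_ne_top_iff.mp <|
    ne_top_of_le_ne_top (Module.length_ne_top_iff.mpr hfin) hle, ?_⟩
  simpa only [moduleLength, ← Module.coe_length] using WithBot.coe_le_coe.mpr hle

/-- For an augmented complete Noetherian local ring `π : A → O`
with `Φ_A = ker π/(ker π)²` of finite length, the quotient `O/η_A` (where
`η_A = π(Ann_A(ker π))`) has finite length and `length Φ_A ≥ length (O/η_A)`. -/
theorem length_cotangent_ge_length_congruence_module
    (A : Type u) [CommRing A] [IsNoetherianRing A] [IsLocalRing A]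
    [IsAdicComplete (maximalIdeal A) A]
    (O : Type u) [CommRing O] [IsDomain O] [IsDiscreteValuationRing O]
    (π : A →+* O) (hπ : Function.Surjective π)
    (hfin : IsFiniteLength A (RingHom.ker π).Cotangent) :
    IsFiniteLength O (O ⧸ ((RingHom.ker π).annihilator.map π)) ∧
    moduleLength O (O ⧸ ((RingHom.ker π).annihilator.map π)) ≤
      moduleLength A (RingHom.ker π).Cotangent :=
  length_cotangent_ge_length_congruence_module_general A O π hπ hfin
end

section
/- Let A be a Noetherian local ring of depth ≥ 1 with a surjection π : A → O onto a discrete valuation ring O such that ker(π)/ker(π)² has finite length. Then Ann_A(ker π) ∩ ker π = 0, and consequently π restricted to Ann_A(ker π) is injective. -/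
universe u

open IsLocalRing

/-!
Put `I = ker π` and `J = Ann(I) ∩ I`, so that `I * J = 0`. Since `I/I²` has finite length it is
killed by some `𝔪ⁿ`, i.e. `𝔪ⁿ I ⊆ I²`, and iterating gives `𝔪ⁿᵏ I ⊆ Iᵏ⁺¹`. By Artin–Rees
`Iᶜ⁺¹ ∩ J ⊆ I J = 0` for some `c`, hence `𝔪ⁿ⁽ᶜ⁺¹⁾ J ⊆ Iᶜ⁺¹ ∩ J = 0`. As `𝔪` contains a
nonzerodivisor, `J = 0`.
-/

section LocalRing

variable {R : Type*} [CommRing R] [IsLocalRing R]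

theorem IsLocalRing.exists_maximalIdeal_pow_le_annihilator_of_isFiniteLength
    {M : Type*} [AddCommGroup M] [Module R M] (hM : IsFiniteLength R M) :
    ∃ n : ℕ, maximalIdeal R ^ n ≤ Module.annihilator R M := by
  obtain ⟨hN, hA⟩ := isFiniteLength_iff_isNoetherian_isArtinian.mp hM
  have hmono : Monotone fun k : ℕ ↦ OrderDual.toDual (maximalIdeal R ^ k • (⊤ : Submodule R M)) :=
    fun _ _ hij ↦ Submodule.smul_mono_left (Ideal.pow_le_pow_right hij)
  obtain ⟨n, hn⟩ := IsArtinian.monotone_stabilizes ⟨_, hmono⟩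
  -- The chain `𝔪ᵏ M` stabilises, and Nakayama kills the stable value.
  have hstable : maximalIdeal R ^ n • (⊤ : Submodule R M) ≤
      maximalIdeal R • maximalIdeal R ^ n • (⊤ : Submodule R M) := by
    have hn : maximalIdeal R ^ n • (⊤ : Submodule R M) = maximalIdeal R ^ (n + 1) • ⊤ :=
      hn (n + 1) n.le_succ
    rw [← Submodule.smul_assoc, Ideal.smul_eq_mul, ← pow_succ', ← hn]
  refine ⟨n, ?_⟩
  rw [← Submodule.annihilator_top, Submodule.le_annihilator_iff]
  exact Submodule.eq_bot_of_le_smul_of_le_jacobson_bot _ _ (IsNoetherian.noetherian _) hstable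
    (IsLocalRing.jacobson_eq_maximalIdeal ⊥ bot_ne_top).ge

theorem Ideal.exists_maximalIdeal_pow_mul_le_sq_of_isFiniteLength_cotangent {I : Ideal R}
    (hI : IsFiniteLength R I.Cotangent) : ∃ n : ℕ, maximalIdeal R ^ n * I ≤ I ^ 2 := by
  obtain ⟨n, hn⟩ := IsLocalRing.exists_maximalIdeal_pow_le_annihilator_of_isFiniteLength hI
  refine ⟨n, Ideal.mul_le.mpr fun r hr s hs ↦ ?_⟩
  have hzero : I.toCotangent (r • ⟨s, hs⟩) = 0 := by
    rw [map_smul]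
    exact Module.mem_annihilator.mp (hn hr) _
  simpa [Ideal.toCotangent_eq_zero, smul_eq_mul] using hzero

end LocalRing

section CommRing

variable {R : Type*} [CommRing R]

theorem Ideal.pow_mul_le_pow_succ_of_mul_le_sq {a I : Ideal R} (h : a * I ≤ I ^ 2) :
    ∀ k : ℕ, a ^ k * I ≤ I ^ (k + 1)
  | 0 => by simp
  | k + 1 =>
    calc a ^ (k + 1) * I = a * (a ^ k * I) := by ring
      _ ≤ a * I ^ (k + 1) := Ideal.mul_mono_right (pow_mul_le_pow_succ_of_mul_le_sq h k)
      _ = a * I * I ^ k := by ring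
      _ ≤ I ^ 2 * I ^ k := Ideal.mul_mono_left h
      _ = I ^ (k + 1 + 1) := by ring

theorem Ideal.exists_pow_succ_inf_le_mul [IsNoetherianRing R] (I J : Ideal R) :
    ∃ c : ℕ, I ^ (c + 1) ⊓ J ≤ I * J := by
  obtain ⟨c, hc⟩ := Ideal.exists_pow_inf_eq_pow_smul I (J : Submodule R R)
  refine ⟨c, ?_⟩
  have hc := hc (c + 1) c.le_succ
  simp only [Ideal.smul_eq_mul, Ideal.mul_top, Nat.add_sub_cancel_left, pow_one] at hc
  rw [hc]
  exact Ideal.mul_mono_right inf_le_right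

theorem Ideal.eq_bot_of_mul_eq_bot_of_mem_nonZeroDivisors {a J : Ideal R} {x : R} (hxa : x ∈ a)
    (hx : x ∈ nonZeroDivisors R) (h : a * J = ⊥) : J = ⊥ := by
  refine (Submodule.eq_bot_iff J).mpr fun y hy ↦ ?_
  have hxy : x * y = 0 := by simpa [h] using Ideal.mul_mem_mul hxa hy
  exact (mul_right_mem_nonZeroDivisors_eq_zero_iff hx).mp (by rwa [mul_comm] at hxy)

end CommRing

theorem annihilator_inf_kernel_eq_bot_general
    (A : Type u) [CommRing A] [IsNoetherianRing A] [IsLocalRing A]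
    (O : Type u) [CommRing O]
    (π : A →+* O)
    (hfin : IsFiniteLength A (RingHom.ker π).Cotangent)
    (hdepth : ∃ x ∈ maximalIdeal A, x ∈ nonZeroDivisors A) :
    (RingHom.ker π).annihilator ⊓ RingHom.ker π = ⊥ ∧
    Set.InjOn π ((RingHom.ker π).annihilator : Set A) := by
  set I := RingHom.ker π
  set J := I.annihilator ⊓ I
  obtain ⟨n, hn⟩ := Ideal.exists_maximalIdeal_pow_mul_le_sq_of_isFiniteLength_cotangent hfin
  obtain ⟨c, hc⟩ := Ideal.exists_pow_succ_inf_le_mul I J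
  have hIJ : I * J = ⊥ := le_bot_iff.mp <|
    (Ideal.mul_mono_right inf_le_left).trans (Submodule.mul_annihilator I).le
  have hkill : (maximalIdeal A ^ n) ^ (c + 1) * J = ⊥ := by
    refine le_bot_iff.mp (le_trans (le_inf ?_ Ideal.mul_le_right) (hc.trans hIJ.le))
    calc (maximalIdeal A ^ n) ^ (c + 1) * J ≤ (maximalIdeal A ^ n) ^ (c + 1) * I :=
          Ideal.mul_mono_right inf_le_right
      _ ≤ I ^ (c + 1 + 1) := Ideal.pow_mul_le_pow_succ_of_mul_le_sq hn _
      _ ≤ I ^ (c + 1) := Ideal.pow_le_pow_right (Nat.le_succ _)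
  obtain ⟨x, hxm, hx⟩ := hdepth
  have hJ : J = ⊥ := Ideal.eq_bot_of_mul_eq_bot_of_mem_nonZeroDivisors
    (Ideal.pow_mem_pow (Ideal.pow_mem_pow hxm n) (c + 1)) (pow_mem (pow_mem hx n) (c + 1)) hkill
  refine ⟨hJ, (Set.injOn_iff_map_eq_zero π I.annihilator).mpr fun y hy hπy ↦ ?_⟩
  exact Ideal.mem_bot.mp (hJ ▸ (⟨hy, hπy⟩ : y ∈ J))

/-- Let A be a Noetherian local ring of depth at least 1 with a
surjection π : A → O onto a DVR such that ker(π)/ker(π)² has finite length. Then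
Ann_A(ker π) ∩ ker π = 0, and consequently π restricted to Ann_A(ker π) is injective. -/
theorem annihilator_inf_kernel_eq_bot
    (A : Type u) [CommRing A] [IsNoetherianRing A] [IsLocalRing A]
    (O : Type u) [CommRing O] [IsDomain O] [IsDiscreteValuationRing O]
    (π : A →+* O) (hπ : Function.Surjective π)
    (hfin : IsFiniteLength A (RingHom.ker π).Cotangent)
    (hdepth : ∃ x ∈ maximalIdeal A, x ∈ nonZeroDivisors A) :
    (RingHom.ker π).annihilator ⊓ RingHom.ker π = ⊥ ∧
    Set.InjOn π ((RingHom.ker π).annihilator : Set A) :=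
  annihilator_inf_kernel_eq_bot_general A O π hfin hdepth
end

section
/- Let A be a Noetherian local ring whose maximal ideal is not an associated prime (equivalently, depth(A) ≥ 1), and let π : A → O be a surjection onto a discrete valuation ring. Then there exists a non-zerodivisor x ∈ A such that π(x) is a uniformizer of O, equivalently, x together with ker(π) generates the maximal ideal of A. -/
universe u

open IsLocalRing

/-- The associated primes of a module, with the definition Mathlib used in December 2024:
prime ideals that are the annihilator of a single element. -/
def associatedPrimesOld (R M : Type*) [CommSemiring R] [AddCommMonoid M] [Module R M] :
    Set (Ideal R) :=
  { I | I.IsPrime ∧ ∃ x : M, I = (Submodule.span R {x}).annihilator }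

/-!
Let `q = π⁻¹(𝔪_O²)`. The associated primes of `A` are finitely many, cover the zero divisors,
and by assumption are all strictly smaller than `𝔪_A`; nor is `𝔪_A ⊆ q`, since `π` maps `𝔪_A`
onto `𝔪_O ≠ 𝔪_O²`. Prime avoidance thus yields a nonzerodivisor `x ∈ 𝔪_A \ q`. Then
`π x ∈ 𝔪_O \ 𝔪_O²` is a uniformizer, and `span {x} ⊔ ker π = π⁻¹(span {π x}) = 𝔪_A`.
-/

theorem associatedPrimesOld_eq_associatedPrimes (R M : Type*) [CommRing R] [AddCommGroup M]
    [Module R M] [IsNoetherianRing R] : associatedPrimesOld R M = associatedPrimes R M := by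
  ext I
  rw [AssociatedPrimes.mem_iff, isAssociatedPrime_iff]
  refine and_congr_right fun _ ↦ exists_congr fun x ↦ ?_
  suffices (Submodule.span R {x}).annihilator = Submodule.colon ⊥ {x} by rw [this]
  ext r
  rw [Submodule.mem_annihilator_span_singleton, Submodule.mem_colon_singleton,
    Submodule.mem_bot]

theorem Ideal.IsMaximal.exists_mem_nonZeroDivisors_notMem {R : Type*} [CommRing R]
    [IsNoetherianRing R] {M q : Ideal R} [hM : M.IsMaximal] (hMass : M ∉ associatedPrimes R R)
    (hMq : ¬ M ≤ q) : ∃ x ∈ M, x ∈ nonZeroDivisors R ∧ x ∉ q := by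
  by_contra! hcover
  have hsub : (M : Set R) ⊆ ⋃ I ∈ insert q (associatedPrimes R R), I := by
    intro x hxM
    by_cases hxq : x ∈ q
    · exact Set.mem_biUnion (Set.mem_insert q _) hxq
    · have hx : x ∈ ⋃ p ∈ associatedPrimes R R, (p : Set R) := by
        rw [biUnion_associatedPrimes_eq_compl_nonZeroDivisors]
        exact fun hreg ↦ hxq (hcover x hxM hreg)
      obtain ⟨p, hp, hxp⟩ := Set.mem_iUnion₂.mp hx
      exact Set.mem_biUnion (Set.mem_insert_of_mem q hp) hxp
  obtain ⟨I, hI, hMI⟩ := (Ideal.subset_union_prime_finite ((associatedPrimes.finite R R).insert q)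
    (f := id) q q (fun I hI hIq _ ↦ ((Set.mem_insert_iff.mp hI).resolve_left hIq).isPrime)).mp hsub
  rcases Set.mem_insert_iff.mp hI with rfl | hIass
  · exact hMq hMI
  · exact hMass (hM.eq_of_le hIass.isPrime.ne_top hMI ▸ hIass)

theorem IsLocalRing.irreducible_of_mem_maximalIdeal_of_notMem_sq {R : Type*} [CommSemiring R]
    [IsLocalRing R] {y : R} (hy : y ∈ maximalIdeal R) (hy2 : y ∉ maximalIdeal R ^ 2) :
    Irreducible y where
  not_isUnit := hy
  isUnit_or_isUnit {a b} hab := by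
    by_contra! hnonunit
    exact hy2 (hab ▸ pow_two (maximalIdeal R) ▸ Ideal.mul_mem_mul hnonunit.1 hnonunit.2)

theorem IsLocalRing.not_maximalIdeal_le_comap_sq {R S : Type*} [CommRing R] [IsLocalRing R]
    [CommRing S] [IsLocalRing S] [IsNoetherianRing S] (hS : ¬ IsField S) (f : R →+* S)
    (hf : Function.Surjective f) : ¬ maximalIdeal R ≤ (maximalIdeal S ^ 2).comap f := by
  intro hle
  have hmap := Ideal.map_mono (f := f) hle
  rw [map_maximalIdeal_of_surjective f hf, Ideal.map_comap_of_surjective f hf] at hmap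
  exact (maximalIdeal_sq_lt_maximalIdeal S).mpr hS |>.not_ge hmap

/-- Let A be a Noetherian local ring whose maximal ideal is not an
associated prime (equivalently depth A ≥ 1), and π : A → O a surjection onto a DVR.
Then there is a nonzerodivisor x ∈ A with π(x) a uniformizer of O; equivalently,
x together with ker(π) generates the maximal ideal of A. -/
theorem exists_nonzerodivisor_mapping_to_uniformizer
    (A : Type u) [CommRing A] [IsNoetherianRing A] [IsLocalRing A]
    (O : Type u) [CommRing O] [IsDomain O] [IsDiscreteValuationRing O]
    (π : A →+* O) (hπ : Function.Surjective π)
    (hass : maximalIdeal A ∉ associatedPrimesOld A A) :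
    ∃ x : A, x ∈ nonZeroDivisors A ∧ Irreducible (π x) ∧
      Ideal.span {x} ⊔ RingHom.ker π = maximalIdeal A := by
  have := hπ.isLocalHom
  obtain ⟨x, hxm, hxreg, hxsq⟩ := Ideal.IsMaximal.exists_mem_nonZeroDivisors_notMem
    (associatedPrimesOld_eq_associatedPrimes A A ▸ hass)
    (not_maximalIdeal_le_comap_sq (IsDiscreteValuationRing.not_isField O) π hπ)
  have hirr : Irreducible (π x) := irreducible_of_mem_maximalIdeal_of_notMem_sq
    (maximalIdeal_comap π ▸ hxm : x ∈ (maximalIdeal O).comap π) hxsq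
  refine ⟨x, hxreg, hirr, ?_⟩
  rw [← maximalIdeal_comap π, (IsDiscreteValuationRing.irreducible_iff_uniformizer _).mp hirr,
    ← Set.image_singleton, ← Ideal.map_span, Ideal.comap_map_of_surjective' π hπ]
end

section
/- Let t ≥ 2 and k a finite field of characteristic p ≥ 5. The matrix A = [[1, p^{t-2}],[0,1]] in SL₂(W(k)/p^{t-1}W(k)) has order p, but there is no element of order p in SL₂(W(k)/p^{t}W(k)) reducing to A under the reduction map SL₂(W(k)/p^t) → SL₂(W(k)/p^{t-1}). -/
/-- The ring W(k)/p^t W(k). -/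
noncomputable def Wq (p : ℕ) [Fact p.Prime] (k : Type) [CommRing k] (t : ℕ) :=
  WittVector p k ⧸ Ideal.span {(p : WittVector p k) ^ t}

noncomputable instance (p : ℕ) [Fact p.Prime] (k : Type) [CommRing k] (t : ℕ) :
    CommRing (Wq p k t) :=
  Ideal.Quotient.commRing _

/-- The reduction map W(k)/p^t → W(k)/p^{t-1}. -/
noncomputable def redq (p : ℕ) [Fact p.Prime] (k : Type) [CommRing k] (t : ℕ) :
    Wq p k t →+* Wq p k (t - 1) :=
  Ideal.Quotient.factor
    (Ideal.span_singleton_le_span_singleton.mpr (pow_dvd_pow _ (Nat.sub_le t 1)))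

/-- The unipotent matrix [[1, p^{t-2}], [0, 1]] in SL₂(W(k)/p^{t-1}). -/
noncomputable def Amat (p : ℕ) [Fact p.Prime] (k : Type) [CommRing k] (t : ℕ) :
    Matrix.SpecialLinearGroup (Fin 2) (Wq p k (t - 1)) :=
  ⟨!![1, (p : Wq p k (t - 1)) ^ (t - 2); 0, 1], by simp [Matrix.det_fin_two_of]⟩

/-!
The kernel of the reduction `SL₂(W(k)/p^t) → SL₂(W(k)/p^{t-1})` is `1 + p^{t-1} M₂`, so the
trace `ε = tr B - 2` of a lift `B` of `A` satisfies `ε² = 0` and `p ε = 0`. By Cayley–Hamilton,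
`Y = B - 1` then has `Y² = ε B`, hence `Y⁴ = 0` and `p Y² = 0`, and the binomial theorem gives
`B^p = 1 + p Y` as soon as `p ≥ 5`. If `B^p = 1`, the upper right entry gives `p b = 0`; but
`b ≡ p^{t-2}` modulo `p^{t-1}`, so `p b = p^{t-1} ≠ 0` in `W(k)/p^t`.
-/

section BinomialTruncation

variable {A : Type*} [Ring A] {p : ℕ} {Y : A}

theorem one_add_pow_prime_eq_of_nsmul_sq_eq_zero (hp : p.Prime) (hpY : p • Y ^ 2 = 0)
    (hYp : Y ^ p = 0) : (1 + Y) ^ p = 1 + p • Y := by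
  have hterm : ∀ m ∈ Finset.Ico 2 (p + 1), Y ^ m * 1 ^ (p - m) * (p.choose m : A) = 0 := by
    intro m hm
    obtain ⟨h2m, hmp⟩ := Finset.mem_Ico.mp hm
    rw [one_pow, mul_one, ← nsmul_eq_mul']
    rcases (Nat.lt_succ_iff.mp hmp).lt_or_eq with hlt | rfl
    · have hpYm : p • Y ^ m = 0 := by
        rw [← Nat.sub_add_cancel h2m, pow_add, ← mul_smul_comm, hpY, mul_zero]
      obtain ⟨K, hK⟩ := hp.dvd_choose_self (by omega) hlt
      rw [hK, mul_nsmul, hpYm, smul_zero]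
    · rw [hYp, smul_zero]
  rw [add_comm, (Commute.one_right Y).add_pow,
    ← Finset.sum_range_add_sum_Ico _ (hp.two_le.trans p.le_succ), Finset.sum_eq_zero hterm,
    add_zero, Finset.sum_range_succ, Finset.sum_range_one]
  simp [Nat.cast_comm]

end BinomialTruncation

namespace Matrix

variable {R : Type*} [CommRing R]

theorem fin_two_unipotent_pow (x : R) (n : ℕ) : !![1, x; 0, 1] ^ n = !![1, (n : R) * x; 0, 1] := by
  induction n with
  | zero => simp [one_fin_two]
  | succ n ih =>
    rw [pow_succ, ih, mul_fin_two]
    simp [add_one_mul, add_comm]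

theorem SpecialLinearGroup.orderOf_eq_prime_of_coe_eq_unipotent {p : ℕ} [Fact p.Prime]
    {g : SpecialLinearGroup (Fin 2) R} {x : R}
    (hg : (g : Matrix (Fin 2) (Fin 2) R) = !![1, x; 0, 1]) (hpx : (p : R) * x = 0) (hx : x ≠ 0) : orderOf g = p := by
  apply orderOf_eq_prime
  · ext : 1
    rw [SpecialLinearGroup.coe_pow, hg, fin_two_unipotent_pow, hpx, SpecialLinearGroup.coe_one,
      one_fin_two]
  · intro h
    exact hx (by simpa [hg] using congrFun (congrFun (congrArg Subtype.val h) 0) 1)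

theorem sub_one_sq_eq_trace_sub_two_smul (M : Matrix (Fin 2) (Fin 2) R) (hM : M.det = 1) :
    (M - 1) ^ 2 = (M.trace - 2) • M := by
  rw [eta_fin_two M, det_fin_two_of] at *
  rw [trace_fin_two_of, sq, one_fin_two, ← sub_eq_zero]
  ext i j
  fin_cases i <;> fin_cases j <;> simp <;> first | linear_combination -hM | ring

theorem pow_prime_eq_one_add_nsmul_sub_one (M : Matrix (Fin 2) (Fin 2) R) (hM : M.det = 1)
    {p : ℕ} (hp : p.Prime) (hp5 : 5 ≤ p) (htr : (M.trace - 2) ^ 2 = 0)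
    (hptr : (p : R) * (M.trace - 2) = 0) : M ^ p = 1 + p • (M - 1) := by
  have hY2 := sub_one_sq_eq_trace_sub_two_smul M hM
  have hY4 : (M - 1) ^ 4 = 0 := by
    rw [show 4 = 2 * 2 by rfl, pow_mul, hY2, smul_pow, htr, zero_smul]
  have hpY2 : p • (M - 1) ^ 2 = 0 := by
    rw [hY2, ← smul_assoc, nsmul_eq_mul, hptr, zero_smul]
  have hYp : (M - 1) ^ p = 0 := by
    rw [← Nat.sub_add_cancel (by omega : 4 ≤ p), pow_add, hY4, mul_zero]
  simpa using one_add_pow_prime_eq_of_nsmul_sq_eq_zero hp hpY2 hYp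

end Matrix

namespace Wq

variable (p : ℕ) [Fact p.Prime] (k : Type) (t : ℕ)

section CommRing

variable [CommRing k]

noncomputable def mk : WittVector p k →+* Wq p k t :=
  Ideal.Quotient.mk _

theorem mk_surjective : Function.Surjective (mk p k t) :=
  Ideal.Quotient.mk_surjective

theorem mk_eq_zero_iff (x : WittVector p k) : mk p k t x = 0 ↔ (p : WittVector p k) ^ t ∣ x :=
  Ideal.Quotient.eq_zero_iff_mem.trans Ideal.mem_span_singleton

theorem natCast_pow_eq_zero {m : ℕ} (h : t ≤ m) : (p : Wq p k t) ^ m = 0 := by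
  rw [← map_natCast (mk p k t), ← map_pow, mk_eq_zero_iff]
  exact pow_dvd_pow _ h

theorem redq_eq_zero_iff (x : Wq p k t) :
    redq p k t x = 0 ↔ ∃ y, x = (p : Wq p k t) ^ (t - 1) * y := by
  constructor
  · intro hx
    obtain ⟨w, rfl⟩ := mk_surjective p k t x
    obtain ⟨z, rfl⟩ := (mk_eq_zero_iff p k (t - 1) w).mp hx
    exact ⟨mk p k t z, by rw [map_mul, map_pow, map_natCast]⟩
  · rintro ⟨y, rfl⟩
    rw [map_mul, map_pow, map_natCast, natCast_pow_eq_zero p k (t - 1) le_rfl, zero_mul]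

variable {p k t}

theorem natCast_mul_eq_zero_of_redq_eq_zero {x : Wq p k t} (hx : redq p k t x = 0) :
    (p : Wq p k t) * x = 0 := by
  obtain ⟨y, rfl⟩ := (redq_eq_zero_iff p k t x).mp hx
  rw [← mul_assoc, ← pow_succ', natCast_pow_eq_zero p k t (by omega), zero_mul]

theorem mul_eq_zero_of_redq_eq_zero (ht : 2 ≤ t) {x y : Wq p k t} (hx : redq p k t x = 0)
    (hy : redq p k t y = 0) : x * y = 0 := by
  obtain ⟨x', rfl⟩ := (redq_eq_zero_iff p k t x).mp hx
  obtain ⟨y', rfl⟩ := (redq_eq_zero_iff p k t y).mp hy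
  rw [mul_mul_mul_comm, ← pow_add, natCast_pow_eq_zero p k t (by omega), zero_mul]

end CommRing

variable {p k t}

theorem natCast_pow_ne_zero [Field k] [CharP k p] {m : ℕ} (h : m < t) : (p : Wq p k t) ^ m ≠ 0 := by
  have hirr : Irreducible (p : WittVector p k) := WittVector.irreducible p
  rw [← map_natCast (mk p k t), ← map_pow, Ne, mk_eq_zero_iff, pow_dvd_pow_iff hirr.ne_zero
    hirr.not_isUnit]
  omega

theorem pow_prime_eq_one_add_nsmul_sub_one_of_redq_trace_eq_two [CommRing k] (ht : 2 ≤ t)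
    (hp : 5 ≤ p) (M : Matrix (Fin 2) (Fin 2) (Wq p k t)) (hM : M.det = 1)
    (htr : redq p k t M.trace = 2) : M ^ p = 1 + p • (M - 1) := by
  have hε : redq p k t (M.trace - 2) = 0 := by rw [map_sub, htr, map_ofNat, sub_self]
  exact M.pow_prime_eq_one_add_nsmul_sub_one hM Fact.out hp
    (by rw [sq]; exact mul_eq_zero_of_redq_eq_zero ht hε hε)
    (natCast_mul_eq_zero_of_redq_eq_zero hε)

end Wq

theorem orderOf_Amat {p : ℕ} [Fact p.Prime] {k : Type} [Field k] [CharP k p] {t : ℕ}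
    (ht : 2 ≤ t) : orderOf (Amat p k t) = p := by
  refine Matrix.SpecialLinearGroup.orderOf_eq_prime_of_coe_eq_unipotent rfl ?_
    (Wq.natCast_pow_ne_zero (by omega))
  rw [← pow_succ', show t - 2 + 1 = t - 1 by omega, Wq.natCast_pow_eq_zero p k _ le_rfl]

theorem no_order_p_lift_of_unipotent_general
    (p : ℕ) [Fact p.Prime] (hp : 5 ≤ p)
    (k : Type) [Field k] [CharP k p]
    (t : ℕ) (ht : 2 ≤ t) :
    orderOf (Amat p k t) = p ∧
    ¬ ∃ B : Matrix.SpecialLinearGroup (Fin 2) (Wq p k t),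
        orderOf B = p ∧ Matrix.SpecialLinearGroup.map (redq p k t) B = Amat p k t := by
  refine ⟨orderOf_Amat ht, ?_⟩
  rintro ⟨B, hBord, hBred⟩
  have hred (i j : Fin 2) :
      redq p k t (B i j) = (Amat p k t : Matrix (Fin 2) (Fin 2) (Wq p k (t - 1))) i j := by
    rw [← hBred, Matrix.SpecialLinearGroup.map_apply_coe, RingHom.mapMatrix_apply, Matrix.map_apply]
  have hBp := Wq.pow_prime_eq_one_add_nsmul_sub_one_of_redq_trace_eq_two ht hp _ B.2
    (by simp [Matrix.trace_fin_two, hred, Amat, one_add_one_eq_two])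
  have hpB : p • ((B : Matrix (Fin 2) (Fin 2) (Wq p k t)) - 1) = 0 := by
    have h1 := congrArg Subtype.val (pow_orderOf_eq_one B)
    rwa [hBord, Matrix.SpecialLinearGroup.coe_pow, hBp, Matrix.SpecialLinearGroup.coe_one,
      add_eq_left] at h1
  have hpb : (p : Wq p k t) * B 0 1 = 0 := by
    simpa [nsmul_eq_mul] using congrFun (congrFun hpB 0) 1
  have hb : redq p k t (B 0 1 - (p : Wq p k t) ^ (t - 2)) = 0 := by
    simp [hred, Amat]
  refine Wq.natCast_pow_ne_zero (p := p) (k := k) (t := t) (m := t - 1) (by omega) ?_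
  calc (p : Wq p k t) ^ (t - 1)
      = p * B 0 1 - p * (B 0 1 - (p : Wq p k t) ^ (t - 2)) := by
        rw [← show t - 2 + 1 = t - 1 by omega]; ring
    _ = 0 := by rw [hpb, Wq.natCast_mul_eq_zero_of_redq_eq_zero hb, sub_zero]

/-- Lemma lem:nonsplit (2), SL₂ case. For t ≥ 2 and k a finite field
of characteristic p ≥ 5, the matrix A = [[1, p^{t-2}],[0,1]] in SL₂(W(k)/p^{t-1}) has
order p, but no element of order p of SL₂(W(k)/p^t) reduces to A. -/
theorem no_order_p_lift_of_unipotent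
    (p : ℕ) [Fact p.Prime] (hp : 5 ≤ p)
    (k : Type) [Field k] [Finite k] [CharP k p]
    (t : ℕ) (ht : 2 ≤ t) :
    orderOf (Amat p k t) = p ∧
    ¬ ∃ B : Matrix.SpecialLinearGroup (Fin 2) (Wq p k t),
        orderOf B = p ∧ Matrix.SpecialLinearGroup.map (redq p k t) B = Amat p k t :=
  no_order_p_lift_of_unipotent_general p hp k t ht
end

section
/- Let G be a split reductive group scheme over W(k) with k a finite field of characteristic p greater than the Coxeter number of G, let T be a split maximal torus of G, and let x̄ ∈ T(k) be a regular semisimple element. If x ∈ G(W(k)) reduces to x̄, then the identity component of the scheme-theoretic centralizer C⁰_G(x) is a split maximal torus T′ of G over W(k) with T′_k = T_k, and x ∈ T′(W(k)). -/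
/-!
Mod `p` the characteristic polynomial of `x` is `∏ⱼ (X - x̄ⱼⱼ)`, whose roots are simple; as `W(k)`
is `p`-adically complete, hence Henselian at `(p)`, they lift to roots `λᵢ`. Since
`(λᵢ - x) · adj (λᵢ - x) = 0`, the `i`-th column of `adj (λᵢ - x)` is a `λᵢ`-eigenvector of `x`,
and mod `p` it is `∏_{j ≠ i} (x̄ᵢᵢ - x̄ⱼⱼ) · eᵢ`, a unit multiple of `eᵢ`. Rescaled, these
columns form a matrix `Q ≡ 1` with `x Q = Q · diag λ`, and `P = Q⁻¹`.
-/

open Polynomial Finset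

namespace Matrix

section CommRing

variable {n S T : Type*} [Fintype n] [DecidableEq n] [CommRing S] [CommRing T]

theorem eval_derivative_charpoly_diagonal (d : n → S) (i : n) :
    (charpoly (diagonal d)).derivative.eval (d i) = ∏ j ∈ univ.erase i, (d i - d j) := by
  rw [charpoly_diagonal, derivative_prod_finset, eval_finsetSum, Finset.sum_eq_single i]
  · simp [eval_prod]
  · intro a _ hai
    rw [eval_mul, eval_prod]
    exact mul_eq_zero_of_left
      (prod_eq_zero (mem_erase.mpr ⟨Ne.symm hai, mem_univ i⟩) (by simp)) _
  · simp

theorem isUnit_prod_erase_sub {d : n → S} (hd : ∀ i j, i ≠ j → IsUnit (d i - d j)) (i : n) :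
    IsUnit (∏ j ∈ univ.erase i, (d i - d j)) :=
  IsUnit.prod_iff.mpr fun j hj => hd i j (ne_of_mem_erase hj).symm

theorem mul_adjugate_eq_smul_of_isRoot {M : Matrix n n S} {a : S} (h : M.charpoly.IsRoot a) :
    M * adjugate (scalar n a - M) = a • adjugate (scalar n a - M) := by
  have hdet : (scalar n a - M) * adjugate (scalar n a - M) = 0 := by
    rw [mul_adjugate, ← eval_charpoly, h.eq_zero, zero_smul]
  rwa [sub_mul, scalar_apply, ← smul_eq_diagonal_mul, sub_eq_zero, eq_comm] at hdet

def adjugateEigenvectors (M : Matrix n n S) (c : n → S) : Matrix n n S :=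
  of fun j i => adjugate (scalar n (c i) - M) j i

theorem mul_adjugateEigenvectors {M : Matrix n n S} {c : n → S}
    (h : ∀ i, M.charpoly.IsRoot (c i)) :
    M * adjugateEigenvectors M c = adjugateEigenvectors M c * diagonal c := by
  ext j i
  have := congr_fun₂ (mul_adjugate_eq_smul_of_isRoot (h i)) j i
  rw [mul_diagonal]
  simpa [adjugateEigenvectors, mul_apply, mul_comm] using this

theorem map_adjugateEigenvectors (M : Matrix n n S) (c : n → S) (f : S →+* T) :
    (adjugateEigenvectors M c).map f = adjugateEigenvectors (M.map f) (f ∘ c) := by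
  ext j i
  have := congr_fun₂ (f.map_adjugate (scalar n (c i) - M)) j i
  simpa [adjugateEigenvectors, Matrix.map_sub] using this

theorem adjugateEigenvectors_diagonal (d : n → S) :
    adjugateEigenvectors (diagonal d) d = diagonal fun i => ∏ j ∈ univ.erase i, (d i - d j) := by
  ext j i
  simp only [adjugateEigenvectors, scalar_apply, diagonal_sub, adjugate_diagonal, of_apply]
  rcases eq_or_ne j i with rfl | hji
  · simp
  · simp [diagonal_apply_ne _ hji]

theorem map_mul_diagonal_inverse_diag_eq_one {Q : Matrix n n S} (f : S →+* T)
    (hQ : (Q.map f).IsDiag) (hu : ∀ i, IsUnit (Q i i)) :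
    (Q * diagonal fun i => Ring.inverse (Q i i)).map f = 1 := by
  rw [Matrix.map_mul, ← hQ.diagonal_diag, diagonal_map (map_zero f), diagonal_mul_diagonal,
    ← diagonal_one]
  congr 1
  ext i
  simp [← map_mul, Ring.mul_inverse_cancel _ (hu i)]

end CommRing

section HenselianRing

variable {n R : Type*} [Fintype n] [DecidableEq n] [CommRing R] {I : Ideal R}
  [HenselianRing R I] {x : Matrix n n R}

theorem exists_isRoot_charpoly_mk_eq (hdiag : (x.map (Ideal.Quotient.mk I)).IsDiag)
    (hreg : ∀ i j, i ≠ j → IsUnit (Ideal.Quotient.mk I (x i i) - Ideal.Quotient.mk I (x j j)))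
    (i : n) : ∃ a, x.charpoly.IsRoot a ∧ Ideal.Quotient.mk I a = Ideal.Quotient.mk I (x i i) := by
  set d := fun j => Ideal.Quotient.mk I (x j j)
  have hχ : x.charpoly.map (Ideal.Quotient.mk I) = (diagonal d).charpoly := by
    rw [← charpoly_map, ← hdiag.diagonal_diag]
    rfl
  have hroot : x.charpoly.eval (x i i) ∈ I := by
    rw [← Ideal.Quotient.eq_zero_iff_mem, ← eval₂_at_apply, ← eval_map, hχ, charpoly_diagonal,
      eval_prod]
    exact prod_eq_zero (mem_univ i) (by simp [d])
  have hsimple : IsUnit (Ideal.Quotient.mk I (x.charpoly.derivative.eval (x i i))) := by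
    rw [← eval₂_at_apply, ← eval_map, ← derivative_map, hχ, eval_derivative_charpoly_diagonal d i]
    exact isUnit_prod_erase_sub hreg i
  obtain ⟨a, ha, haI⟩ := HenselianRing.is_henselian _ (charpoly_monic x) (x i i) hroot hsimple
  exact ⟨a, ha, Ideal.Quotient.eq.mpr haI⟩

theorem exists_mul_eq_mul_diagonal_of_henselianRing
    (hdiag : (x.map (Ideal.Quotient.mk I)).IsDiag)
    (hreg : ∀ i j, i ≠ j → IsUnit (Ideal.Quotient.mk I (x i i) - Ideal.Quotient.mk I (x j j))) :
    ∃ (Q : Matrix n n R) (c : n → R),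
      IsUnit Q.det ∧ Q.map (Ideal.Quotient.mk I) = 1 ∧ x * Q = Q * diagonal c := by
  have := isLocalHom_of_le_jacobson_bot I HenselianRing.jac
  choose c hc hcI using exists_isRoot_charpoly_mk_eq hdiag hreg
  set d := fun j => Ideal.Quotient.mk I (x j j)
  set Q := adjugateEigenvectors x c
  have hQ : Q.map (Ideal.Quotient.mk I) = diagonal fun i => ∏ j ∈ univ.erase i, (d i - d j) := by
    rw [map_adjugateEigenvectors, ← hdiag.diagonal_diag,
      show Ideal.Quotient.mk I ∘ c = d from funext hcI]
    exact adjugateEigenvectors_diagonal d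
  have hQunit (i : n) : IsUnit (Q i i) := by
    have h := congr_fun₂ hQ i i
    rw [map_apply, diagonal_apply_eq] at h
    rw [← isUnit_map_iff (Ideal.Quotient.mk I), h]
    exact isUnit_prod_erase_sub hreg i
  have hQ' := map_mul_diagonal_inverse_diag_eq_one _ (hQ ▸ isDiag_diagonal _) hQunit
  refine ⟨Q * diagonal fun i => Ring.inverse (Q i i), c, ?_, hQ', ?_⟩
  · rw [← isUnit_map_iff (Ideal.Quotient.mk I), RingHom.map_det, RingHom.mapMatrix_apply, hQ',
      det_one]
    exact isUnit_one
  · rw [← Matrix.mul_assoc, mul_adjugateEigenvectors hc, Matrix.mul_assoc, Matrix.mul_assoc,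
      (commute_diagonal _ _).eq]

theorem exists_conj_isDiag_of_henselianRing (hdiag : (x.map (Ideal.Quotient.mk I)).IsDiag)
    (hreg : ∀ i j, i ≠ j → IsUnit (Ideal.Quotient.mk I (x i i) - Ideal.Quotient.mk I (x j j))) :
    ∃ P : Matrix n n R, IsUnit P.det ∧ P.map (Ideal.Quotient.mk I) = 1 ∧ (P * x * P⁻¹).IsDiag := by
  obtain ⟨Q, c, hdet, hQ, hxQ⟩ := exists_mul_eq_mul_diagonal_of_henselianRing hdiag hreg
  refine ⟨Q⁻¹, isUnit_nonsing_inv_det _ hdet, ?_, ?_⟩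
  · have h := congrArg (Matrix.map · (Ideal.Quotient.mk I)) (nonsing_inv_mul Q hdet)
    rwa [Matrix.map_mul, hQ, Matrix.mul_one, Matrix.map_one _ (map_zero _) (map_one _)] at h
  · rw [nonsing_inv_nonsing_inv _ hdet, Matrix.mul_assoc, hxQ, ← Matrix.mul_assoc,
      nonsing_inv_mul _ hdet, Matrix.one_mul]
    exact isDiag_diagonal c

end HenselianRing

end Matrix

theorem WittVector.isUnit_of_ne_zero_quotient_span_p {p : ℕ} [Fact p.Prime] {k : Type*} [Field k]
    [CharP k p] [PerfectRing k p] {a : WittVector p k ⧸ Ideal.span {(p : WittVector p k)}}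
    (ha : a ≠ 0) : IsUnit a := by
  rw [← isUnit_map_iff WittVector.quotientPEquiv]
  exact ((map_ne_zero_iff _ WittVector.quotientPEquiv.injective).mpr ha).isUnit

/-- `G = GL_n` with `T` the diagonal torus; the torus `T'` is `P⁻¹ T P`, and `P ≡ 1 mod p`
gives `T'_k = T_k`. -/
theorem regular_semisimple_lift_lies_in_torus_general
    (p : ℕ) [Fact p.Prime] (n : ℕ)
    (k : Type) [Field k] [CharP k p] [PerfectRing k p]
    (x : Matrix (Fin n) (Fin n) (WittVector p k))
    (hdiag : (x.map (Ideal.Quotient.mk (Ideal.span {(p : WittVector p k)}))).IsDiag)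
    (hreg : ∀ i j : Fin n, i ≠ j →
      Ideal.Quotient.mk (Ideal.span {(p : WittVector p k)}) (x i i) ≠
      Ideal.Quotient.mk (Ideal.span {(p : WittVector p k)}) (x j j)) :
    ∃ P : Matrix (Fin n) (Fin n) (WittVector p k),
      IsUnit P.det ∧
      P.map (Ideal.Quotient.mk (Ideal.span {(p : WittVector p k)})) = 1 ∧
      (P * x * P⁻¹).IsDiag :=
  Matrix.exists_conj_isDiag_of_henselianRing hdiag fun i j hij =>
    WittVector.isUnit_of_ne_zero_quotient_span_p (sub_ne_zero.mpr (hreg i j hij))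

/-- Lemma lem:tori, formulated for the split reductive group GL_n,
whose Coxeter number is n, with T the diagonal torus. Let k be a finite field of
characteristic p > n (p greater than the Coxeter number) and let x ∈ GL_n(W(k)) be a
matrix whose reduction modulo p is a regular semisimple element of the diagonal torus
(i.e. diagonal with pairwise distinct diagonal entries). Then there is a split maximal
torus T' of GL_n over W(k) with T'_k = T_k containing x: concretely, x is conjugated
into the diagonal torus by a matrix P congruent to the identity modulo p. -/
theorem regular_semisimple_lift_lies_in_torus
    (p : ℕ) [Fact p.Prime] (n : ℕ)
    (k : Type) [Field k] [Finite k] [CharP k p] [PerfectRing k p]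
    (hcox : n < p)
    (x : Matrix (Fin n) (Fin n) (WittVector p k))
    (hx : IsUnit x.det)
    (hdiag : (x.map (Ideal.Quotient.mk (Ideal.span {(p : WittVector p k)}))).IsDiag)
    (hreg : ∀ i j : Fin n, i ≠ j →
      Ideal.Quotient.mk (Ideal.span {(p : WittVector p k)}) (x i i) ≠
      Ideal.Quotient.mk (Ideal.span {(p : WittVector p k)}) (x j j)) :
    ∃ P : Matrix (Fin n) (Fin n) (WittVector p k),
      IsUnit P.det ∧
      P.map (Ideal.Quotient.mk (Ideal.span {(p : WittVector p k)})) = 1 ∧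
      (P * x * P⁻¹).IsDiag :=
  regular_semisimple_lift_lies_in_torus_general p n k x hdiag hreg
end
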